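/- arXiv:2512.05775 — 2 statements merged into one kernel-verified Lean document; each statement's English description precedes it below -/
import Mathlib

section
/- Let Z, Z⁺, H, Q be square-integrable random n×m matrices, let α ∈ (0,1) and ω ∈ [0,1], and suppose the compression-error bound E[‖(Z − H) − Q‖²] ≤ ω·E[‖Z − H‖²] holds. Set H⁺ := H + α·Q. Then for every τ > 1, E[‖Z⁺ − H⁺‖²] ≤ τ·(1 − α(1 − ω))·E[‖Z − H‖²] + (τ/(τ − 1))·E[‖Z⁺ − Z‖²]. -/
/-!
Pointwise, `Z⁺ - H⁺ = ((1 - α)(Z - H) + α((Z - H) - Q)) + (Z⁺ - Z)`. Young's inequality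
`‖a + b‖² ≤ τ‖a‖² + τ/(τ - 1)‖b‖²` splits off the last term, and convexity of `‖·‖²` (in the
Frobenius norm) bounds the first by `(1 - α)‖Z - H‖² + α‖(Z - H) - Q‖²`. Taking expectations
and inserting the compression bound gives the claim.
-/

open MeasureTheory Finset

def frobSq {n m : ℕ} (M : Matrix (Fin n) (Fin m) ℝ) : ℝ := ∑ i, ∑ j, (M i j) ^ 2

section NormSq

variable {E : Type*} [NormedAddCommGroup E] [NormedSpace ℝ E]

theorem norm_sq_convex_comb_le {t : ℝ} (ht₀ : 0 ≤ t) (ht₁ : t ≤ 1) (a b : E) :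
    ‖(1 - t) • a + t • b‖ ^ 2 ≤ (1 - t) * ‖a‖ ^ 2 + t * ‖b‖ ^ 2 :=
  (convexOn_univ_norm.pow (fun x _ => norm_nonneg x) 2).2 trivial trivial (by linarith) ht₀
    (by ring)

-- Young's inequality is convexity of `‖·‖²` at the weights `1/τ` and `1 - 1/τ`.
theorem norm_add_sq_le_of_one_lt {τ : ℝ} (hτ : 1 < τ) (a b : E) :
    ‖a + b‖ ^ 2 ≤ τ * ‖a‖ ^ 2 + τ / (τ - 1) * ‖b‖ ^ 2 := by
  have hτ₀ : τ ≠ 0 := (zero_lt_one.trans hτ).ne'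
  have hτ₁ : τ - 1 ≠ 0 := sub_ne_zero.2 hτ.ne'
  have hsplit : a + b = (1 - τ⁻¹) • ((τ / (τ - 1)) • b) + τ⁻¹ • (τ • a) := by
    rw [smul_smul, smul_smul, inv_mul_cancel₀ hτ₀, one_smul]
    have : (1 - τ⁻¹) * (τ / (τ - 1)) = 1 := by field_simp
    rw [this, one_smul, add_comm]
  have h := norm_sq_convex_comb_le (inv_nonneg.2 (by linarith)) (inv_le_one_of_one_le₀ hτ.le)
    ((τ / (τ - 1)) • b) (τ • a)
  rw [← hsplit, norm_smul, norm_smul, Real.norm_of_nonneg (by linarith : (0 : ℝ) ≤ τ),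
    Real.norm_of_nonneg (div_nonneg (by linarith : (0 : ℝ) ≤ τ) (by linarith))] at h
  convert h using 1
  field_simp
  ring

theorem norm_sq_convex_comb_add_le {α τ : ℝ} (hα₀ : 0 ≤ α) (hα₁ : α ≤ 1) (hτ : 1 < τ)
    (a b c : E) :
    ‖(1 - α) • a + α • b + c‖ ^ 2 ≤
      τ * ((1 - α) * ‖a‖ ^ 2 + α * ‖b‖ ^ 2) + τ / (τ - 1) * ‖c‖ ^ 2 :=
  (norm_add_sq_le_of_one_lt hτ _ c).trans <| by
    gcongr
    exact norm_sq_convex_comb_le hα₀ hα₁ a b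

theorem integral_norm_sq_convex_comb_add_le {Ω : Type*} [MeasurableSpace Ω] {P : Measure Ω}
    {α τ : ℝ} (hα₀ : 0 ≤ α) (hα₁ : α ≤ 1) (hτ : 1 < τ) {X Y W : Ω → E}
    (hX : Integrable (fun ω => ‖X ω‖ ^ 2) P) (hY : Integrable (fun ω => ‖Y ω‖ ^ 2) P)
    (hW : Integrable (fun ω => ‖W ω‖ ^ 2) P) :
    ∫ ω, ‖(1 - α) • X ω + α • Y ω + W ω‖ ^ 2 ∂P ≤
      τ * ((1 - α) * ∫ ω, ‖X ω‖ ^ 2 ∂P + α * ∫ ω, ‖Y ω‖ ^ 2 ∂P) +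
        τ / (τ - 1) * ∫ ω, ‖W ω‖ ^ 2 ∂P := by
  have hXY : Integrable (fun ω => (1 - α) * ‖X ω‖ ^ 2 + α * ‖Y ω‖ ^ 2) P :=
    (hX.const_mul _).add (hY.const_mul _)
  calc ∫ ω, ‖(1 - α) • X ω + α • Y ω + W ω‖ ^ 2 ∂P
      ≤ ∫ ω, τ * ((1 - α) * ‖X ω‖ ^ 2 + α * ‖Y ω‖ ^ 2) + τ / (τ - 1) * ‖W ω‖ ^ 2 ∂P :=
        integral_mono_of_nonneg (.of_forall fun _ => by positivity)
          ((hXY.const_mul τ).add (hW.const_mul _))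
          (.of_forall fun ω => norm_sq_convex_comb_add_le hα₀ hα₁ hτ _ _ _)
    _ = _ := by
        rw [integral_add (hXY.const_mul τ) (hW.const_mul _), integral_const_mul,
          integral_const_mul, integral_add (hX.const_mul _) (hY.const_mul _),
          integral_const_mul, integral_const_mul]

end NormSq

section Frobenius

attribute [local instance] Matrix.frobeniusNormedAddCommGroup Matrix.frobeniusNormedSpace

variable {n m : ℕ}

theorem frobSq_eq_norm_sq (M : Matrix (Fin n) (Fin m) ℝ) : frobSq M = ‖M‖ ^ 2 := by
  rw [Matrix.frobenius_norm_def, ← Real.rpow_natCast,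
    ← Real.rpow_mul (by positivity)]
  norm_num [frobSq]

theorem measurable_frobSq {Ω : Type*} [MeasurableSpace Ω] {X : Ω → Matrix (Fin n) (Fin m) ℝ}
    (hX : ∀ i j, Measurable fun ω => X ω i j) : Measurable fun ω => frobSq (X ω) :=
  Finset.measurable_sum _ fun i _ => Finset.measurable_sum _ fun j _ => (hX i j).pow_const 2

theorem integrable_frobSq_sub {Ω : Type*} [MeasurableSpace Ω] {P : Measure Ω}
    {X Y : Ω → Matrix (Fin n) (Fin m) ℝ}
    (hX : ∀ i j, Measurable fun ω => X ω i j) (hY : ∀ i j, Measurable fun ω => Y ω i j)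
    (hXi : Integrable (fun ω => frobSq (X ω)) P) (hYi : Integrable (fun ω => frobSq (Y ω)) P) :
    Integrable (fun ω => frobSq (X ω - Y ω)) P := by
  refine ((hXi.const_mul 2).add (hYi.const_mul 2)).mono'
    (measurable_frobSq fun i j => (hX i j).sub (hY i j)).aestronglyMeasurable
    (.of_forall fun ω => ?_)
  have h := norm_add_sq_le_of_one_lt one_lt_two (X ω) (-Y ω)
  rw [← sub_eq_add_neg, norm_neg] at h
  rw [Real.norm_of_nonneg (by rw [frobSq_eq_norm_sq]; positivity)]
  simp only [frobSq_eq_norm_sq, Pi.add_apply]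
  norm_num at h
  exact h

theorem statement12_general {n m : ℕ}
    {Ω : Type*} [MeasurableSpace Ω] (P : Measure Ω)
    (α ωc : ℝ) (hα0 : 0 < α) (hα1 : α < 1)
    (Z Zp H Q : Ω → Matrix (Fin n) (Fin m) ℝ)
    (hZmeas : ∀ i j, Measurable fun ω => Z ω i j)
    (hZpmeas : ∀ i j, Measurable fun ω => Zp ω i j)
    (hHmeas : ∀ i j, Measurable fun ω => H ω i j)
    (hQmeas : ∀ i j, Measurable fun ω => Q ω i j)
    (hZint : Integrable (fun ω => frobSq (Z ω)) P)
    (hZpint : Integrable (fun ω => frobSq (Zp ω)) P)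
    (hHint : Integrable (fun ω => frobSq (H ω)) P)
    (hQint : Integrable (fun ω => frobSq (Q ω)) P)
    (hcomp : ∫ ω, frobSq ((Z ω - H ω) - Q ω) ∂P ≤ ωc * ∫ ω, frobSq (Z ω - H ω) ∂P)
    (Hp : Ω → Matrix (Fin n) (Fin m) ℝ) (hHp : ∀ ω, Hp ω = H ω + α • Q ω)
    (τ : ℝ) (hτ : 1 < τ) :
    ∫ ω, frobSq (Zp ω - Hp ω) ∂P ≤
      τ * (1 - α * (1 - ωc)) * ∫ ω, frobSq (Z ω - H ω) ∂P +
        τ / (τ - 1) * ∫ ω, frobSq (Zp ω - Z ω) ∂P := by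
  have hZH := integrable_frobSq_sub hZmeas hHmeas hZint hHint
  have hZHQ := integrable_frobSq_sub (X := fun ω => Z ω - H ω)
    (fun i j => (hZmeas i j).sub (hHmeas i j)) hQmeas hZH hQint
  have hZpZ := integrable_frobSq_sub hZpmeas hZmeas hZpint hZint
  have hsplit : ∀ ω, Zp ω - Hp ω =
      (1 - α) • (Z ω - H ω) + α • (Z ω - H ω - Q ω) + (Zp ω - Z ω) := fun ω => by
    rw [hHp]; module
  simp only [hsplit, frobSq_eq_norm_sq] at hZH hZHQ hZpZ hcomp ⊢
  have hmain := integral_norm_sq_convex_comb_add_le hα0.le hα1.le hτ hZH hZHQ hZpZ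
  have hτα : 0 ≤ τ * α := by positivity
  linear_combination hmain + mul_le_mul_of_nonneg_left hcomp hτα

/-- Error-compensation recursion for the reference point:
if `E‖(Z − H) − Q‖² ≤ ω E‖Z − H‖²` and `H⁺ = H + α Q`, then for every `τ > 1`,
`E‖Z⁺ − H⁺‖² ≤ τ (1 − α(1 − ω)) E‖Z − H‖² + (τ/(τ−1)) E‖Z⁺ − Z‖²`. -/
theorem statement12 {n m : ℕ}
    {Ω : Type*} [MeasurableSpace Ω] (P : Measure Ω) [IsProbabilityMeasure P]
    (α ωc : ℝ) (hα0 : 0 < α) (hα1 : α < 1) (hωc0 : 0 ≤ ωc) (hωc1 : ωc ≤ 1)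
    (Z Zp H Q : Ω → Matrix (Fin n) (Fin m) ℝ)
    (hZmeas : ∀ i j, Measurable fun ω => Z ω i j)
    (hZpmeas : ∀ i j, Measurable fun ω => Zp ω i j)
    (hHmeas : ∀ i j, Measurable fun ω => H ω i j)
    (hQmeas : ∀ i j, Measurable fun ω => Q ω i j)
    (hZint : Integrable (fun ω => frobSq (Z ω)) P)
    (hZpint : Integrable (fun ω => frobSq (Zp ω)) P)
    (hHint : Integrable (fun ω => frobSq (H ω)) P)
    (hQint : Integrable (fun ω => frobSq (Q ω)) P)
    (hcomp : ∫ ω, frobSq ((Z ω - H ω) - Q ω) ∂P ≤ ωc * ∫ ω, frobSq (Z ω - H ω) ∂P)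
    (Hp : Ω → Matrix (Fin n) (Fin m) ℝ) (hHp : ∀ ω, Hp ω = H ω + α • Q ω)
    (τ : ℝ) (hτ : 1 < τ) :
    ∫ ω, frobSq (Zp ω - Hp ω) ∂P ≤
      τ * (1 - α * (1 - ωc)) * ∫ ω, frobSq (Z ω - H ω) ∂P +
        τ / (τ - 1) * ∫ ω, frobSq (Zp ω - Z ω) ∂P :=
  statement12_general P α ωc hα0 hα1 Z Zp H Q hZmeas hZpmeas hHmeas hQmeas hZint hZpint hHint hQint
    hcomp Hp hHp τ hτ

end Frobenius
end

section
/- Let W ∈ ℝ^{n×n} be symmetric doubly stochastic, let η ∈ (0,1], and set W_η := I − η(I − W). Let ω ≥ 0, and let Y, H, Ỹ, G, G⁺ be square-integrable random n×m matrices with E[‖Y − Ỹ‖²] ≤ ω·E[‖Y − H‖²]. Set Y⁺ := W_η·Y + (G⁺ − G) + η(I − W)(Y − Ỹ). Then E[‖Y⁺ − Y‖²] ≤ 12·E[‖Y − Ȳ‖²] + 3·E[‖G⁺ − G‖²] + 12η²ω·E[‖Y − H‖²]. -/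
/-!
Since every row of `W` sums to one, `(I - W) Ȳ = 0`, so the consensus part of `Y` drops out and
`Y⁺ - Y = -η (I - W)(Y - Ȳ) + (G⁺ - G) + η (I - W)(Y - Ỹ)`. Each row of `W M` is a convex
combination of rows of `M`, so by Jensen and the unit column sums `‖W M‖ ≤ ‖M‖`, whence
`‖(I - W) M‖² ≤ 4 ‖M‖²`. The bound `‖A + B + C‖² ≤ 3 (‖A‖² + ‖B‖² + ‖C‖²)` and `η² ≤ 1` give
the estimate pointwise; taking expectations and using the compression bound finishes the proof.
-/

open MeasureTheory Finset

/-- The matrix each of whose rows is the average of the rows of `M`. -/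
noncomputable def rowAvg {n m : ℕ} (M : Matrix (Fin n) (Fin m) ℝ) :
    Matrix (Fin n) (Fin m) ℝ :=
  Matrix.of fun _ j => (n : ℝ)⁻¹ * ∑ i, M i j

section Frobenius

variable {n m : ℕ}

lemma frobSq_nonneg (M : Matrix (Fin n) (Fin m) ℝ) : 0 ≤ frobSq M :=
  sum_nonneg fun _ _ => sum_nonneg fun _ _ => sq_nonneg _

lemma frobSq_smul (c : ℝ) (M : Matrix (Fin n) (Fin m) ℝ) :
    frobSq (c • M) = c ^ 2 * frobSq M := by
  simp only [frobSq, Matrix.smul_apply, smul_eq_mul, mul_pow, mul_sum]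

lemma frobSq_sub_le (A B : Matrix (Fin n) (Fin m) ℝ) :
    frobSq (A - B) ≤ 2 * frobSq A + 2 * frobSq B := by
  simp only [frobSq, mul_sum, ← sum_add_distrib]
  gcongr with i _ j _
  simp only [Matrix.sub_apply]
  nlinarith [sq_nonneg (A i j + B i j)]

lemma frobSq_add_add_le (A B C : Matrix (Fin n) (Fin m) ℝ) :
    frobSq (A + B + C) ≤ 3 * (frobSq A + frobSq B + frobSq C) := by
  simp only [frobSq, mul_sum, ← sum_add_distrib]
  gcongr with i _ j _
  simp only [Matrix.add_apply]
  nlinarith [sq_nonneg (A i j - B i j), sq_nonneg (A i j - C i j), sq_nonneg (B i j - C i j)]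

lemma frobSq_mul_le {W : Matrix (Fin n) (Fin n) ℝ} (hW : W ∈ doublyStochastic ℝ (Fin n))
    (M : Matrix (Fin n) (Fin m) ℝ) : frobSq (W * M) ≤ frobSq M := by
  obtain ⟨hnonneg, hrow, hcol⟩ := mem_doublyStochastic_iff_sum.mp hW
  simp only [frobSq]
  rw [sum_comm, sum_comm (γ := Fin n)]
  refine sum_le_sum fun j _ => ?_
  calc ∑ i, (W * M) i j ^ 2 ≤ ∑ i, ∑ k, W i k * M k j ^ 2 := by
        refine sum_le_sum fun i _ => ?_
        simpa only [Matrix.mul_apply, smul_eq_mul] using (even_two.convexOn_pow (𝕜 := ℝ)).map_sum_le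
          (fun k _ => hnonneg i k) (hrow i) (fun k _ => Set.mem_univ (M k j))
    _ = ∑ k, M k j ^ 2 := by
        rw [sum_comm]
        simp only [← sum_mul, hcol, one_mul]

lemma frobSq_one_sub_mul_le {W : Matrix (Fin n) (Fin n) ℝ} (hW : W ∈ doublyStochastic ℝ (Fin n))
    (M : Matrix (Fin n) (Fin m) ℝ) : frobSq ((1 - W) * M) ≤ 4 * frobSq M := by
  rw [Matrix.sub_mul, Matrix.one_mul]
  linarith [frobSq_sub_le M (W * M), frobSq_mul_le hW M]

lemma mul_rowAvg {W : Matrix (Fin n) (Fin n) ℝ} (hrow : ∀ i, ∑ j, W i j = 1)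
    (M : Matrix (Fin n) (Fin m) ℝ) : W * rowAvg M = rowAvg M := by
  ext i j
  simp only [Matrix.mul_apply, rowAvg, Matrix.of_apply, ← sum_mul, hrow, one_mul]

lemma frobSq_rowAvg_le (M : Matrix (Fin n) (Fin m) ℝ) : frobSq (rowAvg M) ≤ frobSq M := by
  rcases Nat.eq_zero_or_pos n with rfl | hn
  · simp [frobSq]
  simp only [frobSq]
  rw [sum_comm, sum_comm (γ := Fin n)]
  refine sum_le_sum fun j _ => ?_
  have hcs : (∑ i, M i j) ^ 2 ≤ n * ∑ i, M i j ^ 2 := by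
    simpa using sq_sum_le_card_mul_sum_sq (s := univ) (f := fun i => M i j)
  have hn' : (n : ℝ) ≠ 0 := by positivity
  calc ∑ _ : Fin n, rowAvg M _ j ^ 2 = (n : ℝ)⁻¹ * (∑ i, M i j) ^ 2 := by
        simp only [rowAvg, Matrix.of_apply, sum_const, card_univ, Fintype.card_fin, nsmul_eq_mul]
        field_simp
    _ ≤ (n : ℝ)⁻¹ * (n * ∑ i, M i j ^ 2) := by gcongr
    _ = ∑ i, M i j ^ 2 := by field_simp

lemma frobSq_compressedTrackingStep_sub_le {W : Matrix (Fin n) (Fin n) ℝ}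
    (hW : W ∈ doublyStochastic ℝ (Fin n)) {η : ℝ} (hη : |η| ≤ 1)
    (Y Ytil D : Matrix (Fin n) (Fin m) ℝ) :
    frobSq ((1 - η • (1 - W)) * Y + D + η • ((1 - W) * (Y - Ytil)) - Y) ≤
      12 * frobSq (Y - rowAvg Y) + 3 * frobSq D + 12 * η ^ 2 * frobSq (Y - Ytil) := by
  have hconsensus : (1 - W) * (Y - rowAvg Y) = (1 - W) * Y := by
    rw [Matrix.mul_sub, Matrix.sub_mul 1 W (rowAvg Y), Matrix.one_mul,
      mul_rowAvg (sum_row_of_mem_doublyStochastic hW), sub_self, sub_zero]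
  have hdecomp : (1 - η • (1 - W)) * Y + D + η • ((1 - W) * (Y - Ytil)) - Y =
      (-η) • ((1 - W) * (Y - rowAvg Y)) + D + η • ((1 - W) * (Y - Ytil)) := by
    rw [hconsensus, Matrix.sub_mul, Matrix.one_mul, Matrix.smul_mul, neg_smul]
    abel
  have hη2 : η ^ 2 ≤ 1 := sq_le_one_iff_abs_le_one η |>.mpr hη
  calc _ ≤ 3 * (η ^ 2 * frobSq ((1 - W) * (Y - rowAvg Y)) + frobSq D +
          η ^ 2 * frobSq ((1 - W) * (Y - Ytil))) := by
        have h := frobSq_add_add_le ((-η) • ((1 - W) * (Y - rowAvg Y))) D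
          (η • ((1 - W) * (Y - Ytil)))
        rwa [frobSq_smul, frobSq_smul, neg_sq, ← hdecomp] at h
    _ ≤ 3 * (η ^ 2 * (4 * frobSq (Y - rowAvg Y)) + frobSq D +
          η ^ 2 * (4 * frobSq (Y - Ytil))) := by
        gcongr <;> exact frobSq_one_sub_mul_le hW _
    _ ≤ _ := by nlinarith [mul_le_mul_of_nonneg_right hη2 (frobSq_nonneg (Y - rowAvg Y))]

end Frobenius

section Integrability

variable {n m : ℕ} {Ω : Type*} [MeasurableSpace Ω] {P : Measure Ω}
  {F G : Ω → Matrix (Fin n) (Fin m) ℝ}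

lemma measurable_frobSq_s13 (hF : ∀ i j, Measurable fun ω => F ω i j) :
    Measurable fun ω => frobSq (F ω) :=
  Finset.measurable_sum _ fun i _ => Finset.measurable_sum _ fun j _ => (hF i j).pow_const 2

lemma integrable_frobSq_of_le (hF : ∀ i j, Measurable fun ω => F ω i j) {g : Ω → ℝ}
    (hg : Integrable g P) (hle : ∀ ω, frobSq (F ω) ≤ g ω) :
    Integrable (fun ω => frobSq (F ω)) P :=
  hg.mono' (measurable_frobSq_s13 hF).aestronglyMeasurable <| ae_of_all _ fun ω => by
    rw [Real.norm_of_nonneg (frobSq_nonneg _)]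
    exact hle ω

lemma integrable_frobSq_sub_s13 (hF : ∀ i j, Measurable fun ω => F ω i j)
    (hG : ∀ i j, Measurable fun ω => G ω i j) (hFi : Integrable (fun ω => frobSq (F ω)) P)
    (hGi : Integrable (fun ω => frobSq (G ω)) P) :
    Integrable (fun ω => frobSq (F ω - G ω)) P :=
  integrable_frobSq_of_le (fun i j => (hF i j).sub (hG i j))
    ((hFi.const_mul 2).add (hGi.const_mul 2)) fun _ => frobSq_sub_le _ _

lemma measurable_rowAvg_apply (hF : ∀ i j, Measurable fun ω => F ω i j) (i : Fin n) (j : Fin m) :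
    Measurable fun ω => rowAvg (F ω) i j :=
  measurable_const.mul (Finset.measurable_sum _ fun k _ => hF k j)

lemma integrable_frobSq_sub_rowAvg (hF : ∀ i j, Measurable fun ω => F ω i j)
    (hFi : Integrable (fun ω => frobSq (F ω)) P) :
    Integrable (fun ω => frobSq (F ω - rowAvg (F ω))) P :=
  integrable_frobSq_sub_s13 hF (measurable_rowAvg_apply hF) hFi
    (integrable_frobSq_of_le (measurable_rowAvg_apply hF) hFi fun _ => frobSq_rowAvg_le _)

end Integrability

theorem statement13_general {n m : ℕ}
    {Ω : Type*} [MeasurableSpace Ω] (P : Measure Ω)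
    (W : Matrix (Fin n) (Fin n) ℝ)
    (hWnn : ∀ i j, 0 ≤ W i j) (hWsymm : W.transpose = W)
    (hWrow : ∀ i, ∑ j, W i j = 1)
    (η : ℝ) (hη0 : 0 < η) (hη1 : η ≤ 1)
    (ωc : ℝ)
    (Y H Ytil G Gp : Ω → Matrix (Fin n) (Fin m) ℝ)
    (hYmeas : ∀ i j, Measurable fun ω => Y ω i j)
    (hYtmeas : ∀ i j, Measurable fun ω => Ytil ω i j)
    (hGmeas : ∀ i j, Measurable fun ω => G ω i j)
    (hGpmeas : ∀ i j, Measurable fun ω => Gp ω i j)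
    (hYint : Integrable (fun ω => frobSq (Y ω)) P)
    (hYtint : Integrable (fun ω => frobSq (Ytil ω)) P)
    (hGint : Integrable (fun ω => frobSq (G ω)) P)
    (hGpint : Integrable (fun ω => frobSq (Gp ω)) P)
    (hcomp : ∫ ω, frobSq (Y ω - Ytil ω) ∂P ≤ ωc * ∫ ω, frobSq (Y ω - H ω) ∂P)
    (Yp : Ω → Matrix (Fin n) (Fin m) ℝ)
    (hYp : ∀ ω, Yp ω = (1 - η • (1 - W)) * Y ω + (Gp ω - G ω) +
      η • ((1 - W) * (Y ω - Ytil ω))) :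
    ∫ ω, frobSq (Yp ω - Y ω) ∂P ≤
      12 * ∫ ω, frobSq (Y ω - rowAvg (Y ω)) ∂P +
        3 * ∫ ω, frobSq (Gp ω - G ω) ∂P +
        12 * η ^ 2 * ωc * ∫ ω, frobSq (Y ω - H ω) ∂P := by
  have hWcol (j : Fin n) : ∑ i, W i j = 1 := by
    rw [← hWsymm] at hWrow
    exact hWrow j
  have hW : W ∈ doublyStochastic ℝ (Fin n) := mem_doublyStochastic_iff_sum.mpr ⟨hWnn, hWrow, hWcol⟩
  have hη : |η| ≤ 1 := abs_le.mpr ⟨by linarith, hη1⟩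
  have hcons := (integrable_frobSq_sub_rowAvg hYmeas hYint).const_mul 12
  have hgrad := (integrable_frobSq_sub_s13 hGpmeas hGmeas hGpint hGint).const_mul 3
  have hcompr := (integrable_frobSq_sub_s13 hYmeas hYtmeas hYint hYtint).const_mul (12 * η ^ 2)
  calc ∫ ω, frobSq (Yp ω - Y ω) ∂P
      ≤ ∫ ω, (12 * frobSq (Y ω - rowAvg (Y ω)) + 3 * frobSq (Gp ω - G ω) +
          12 * η ^ 2 * frobSq (Y ω - Ytil ω)) ∂P :=
        integral_mono_of_nonneg (ae_of_all _ fun _ => frobSq_nonneg _) ((hcons.add hgrad).add hcompr)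
          (ae_of_all _ fun ω => by
            dsimp only
            rw [hYp ω]
            exact frobSq_compressedTrackingStep_sub_le hW hη _ _ _)
    _ = 12 * ∫ ω, frobSq (Y ω - rowAvg (Y ω)) ∂P + 3 * ∫ ω, frobSq (Gp ω - G ω) ∂P +
          12 * η ^ 2 * ∫ ω, frobSq (Y ω - Ytil ω) ∂P := by
        rw [integral_add _ hcompr, integral_add hcons hgrad, integral_const_mul,
          integral_const_mul, integral_const_mul]
        exact hcons.add hgrad
    _ ≤ _ := by
        nlinarith [mul_le_mul_of_nonneg_left hcomp (by positivity : (0 : ℝ) ≤ 12 * η ^ 2)]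

/-- One-step drift bound for the compressed gradient-tracking
variable: with `W_η = I − η(I − W)`, `η ∈ (0,1]`, compression error
`E‖Y − Ỹ‖² ≤ ω E‖Y − H‖²`, and `Y⁺ = W_η Y + (G⁺ − G) + η (I − W)(Y − Ỹ)`:
`E‖Y⁺ − Y‖² ≤ 12 E‖Y − Ȳ‖² + 3 E‖G⁺ − G‖² + 12 η² ω E‖Y − H‖²`. -/
theorem statement13 {n m : ℕ} (hn : 0 < n)
    {Ω : Type*} [MeasurableSpace Ω] (P : Measure Ω) [IsProbabilityMeasure P]
    (W : Matrix (Fin n) (Fin n) ℝ)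
    (hWnn : ∀ i j, 0 ≤ W i j) (hWsymm : W.transpose = W)
    (hWrow : ∀ i, ∑ j, W i j = 1)
    (η : ℝ) (hη0 : 0 < η) (hη1 : η ≤ 1)
    (ωc : ℝ) (hωc : 0 ≤ ωc)
    (Y H Ytil G Gp : Ω → Matrix (Fin n) (Fin m) ℝ)
    (hYmeas : ∀ i j, Measurable fun ω => Y ω i j)
    (hHmeas : ∀ i j, Measurable fun ω => H ω i j)
    (hYtmeas : ∀ i j, Measurable fun ω => Ytil ω i j)
    (hGmeas : ∀ i j, Measurable fun ω => G ω i j)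
    (hGpmeas : ∀ i j, Measurable fun ω => Gp ω i j)
    (hYint : Integrable (fun ω => frobSq (Y ω)) P)
    (hHint : Integrable (fun ω => frobSq (H ω)) P)
    (hYtint : Integrable (fun ω => frobSq (Ytil ω)) P)
    (hGint : Integrable (fun ω => frobSq (G ω)) P)
    (hGpint : Integrable (fun ω => frobSq (Gp ω)) P)
    (hcomp : ∫ ω, frobSq (Y ω - Ytil ω) ∂P ≤ ωc * ∫ ω, frobSq (Y ω - H ω) ∂P)
    (Yp : Ω → Matrix (Fin n) (Fin m) ℝ)
    (hYp : ∀ ω, Yp ω = (1 - η • (1 - W)) * Y ω + (Gp ω - G ω) +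
      η • ((1 - W) * (Y ω - Ytil ω))) :
    ∫ ω, frobSq (Yp ω - Y ω) ∂P ≤
      12 * ∫ ω, frobSq (Y ω - rowAvg (Y ω)) ∂P +
        3 * ∫ ω, frobSq (Gp ω - G ω) ∂P +
        12 * η ^ 2 * ωc * ∫ ω, frobSq (Y ω - H ω) ∂P :=
  statement13_general P W hWnn hWsymm hWrow η hη0 hη1 ωc Y H Ytil G Gp hYmeas hYtmeas hGmeas hGpmeas
    hYint hYtint hGint hGpint hcomp Yp hYp
end
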